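/- Let 𝓕 be a nonempty ω-closed family of subsets of ℕ with ∅ ∉ 𝓕. Then the semigroup S(𝓕) is simple — i.e. its only two-sided ideal is S(𝓕) itself (a two-sided ideal being a nonempty subset J with S(𝓕)·J ⊆ J and J·S(𝓕) ⊆ J) — if and only if for all F₁, F₂ ∈ 𝓕 there exist k₁, k₂ ∈ ℕ such that F₁ ⊆ −k₁ + F₂ and F₂ ⊆ −k₂ + F₁. -/

import Mathlib

/-- `zshift n F = {n + k : k ∈ F}`. -/
def zshift (n : ℤ) (F : Set ℤ) : Set ℤ := {m : ℤ | ∃ k ∈ F, m = n + k}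

/-- A family of subsets of `ℕ` (viewed as subsets of `ℤ`) is `ω`-closed if it consists of
sets of nonnegative integers and `F₁ ∩ (-n + F₂)` belongs to the family for all `n : ℕ`
and all members `F₁, F₂` of the family. -/
def OmegaClosed (𝓕 : Set (Set ℤ)) : Prop :=
  (∀ F ∈ 𝓕, ∀ x ∈ F, 0 ≤ x) ∧
    ∀ n : ℕ, ∀ F₁ ∈ 𝓕, ∀ F₂ ∈ 𝓕, F₁ ∩ zshift (-(n : ℤ)) F₂ ∈ 𝓕

/-- The binary operation on triples `(i, j, F)`:
`(i₁,j₁,F₁)·(i₂,j₂,F₂) = (i₁−j₁+i₂, j₂, (j₁−i₂+F₁) ∩ F₂)` if `j₁ < i₂`;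
`(i₁, j₂, F₁ ∩ F₂)` if `j₁ = i₂`; `(i₁, j₁−i₂+j₂, F₁ ∩ (i₂−j₁+F₂))` if `j₁ > i₂`. -/
def smul3 (x y : ℤ × ℤ × Set ℤ) : ℤ × ℤ × Set ℤ :=
  if x.2.1 < y.1 then
    (x.1 - x.2.1 + y.1, y.2.1, zshift (x.2.1 - y.1) x.2.2 ∩ y.2.2)
  else if x.2.1 = y.1 then
    (x.1, y.2.1, x.2.2 ∩ y.2.2)
  else
    (x.1, x.2.1 - y.1 + y.2.1, x.2.2 ∩ zshift (y.1 - x.2.1) y.2.2)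

/-- The carrier of the semigroup `S(𝓕)`: all triples whose third component lies in `𝓕`. -/
def Scar (𝓕 : Set (Set ℤ)) : Set (ℤ × ℤ × Set ℤ) := {x | x.2.2 ∈ 𝓕}

/-!
Write `F ≼ G` (`ShiftLE F G`) when `F ⊆ -k + G` for some `k : ℕ`; this is a preorder. The third
component of a product in `S(𝓕)` is `≼` the third components of both factors, so for `H ∈ 𝓕` the
triples whose third component is `≼ H` form an ideal; if `S(𝓕)` is simple this ideal is
everything, which gives the shift condition. Conversely, if `F ⊆ -k + G`, then `(i, j, F)` is
obtained from any `(a, b, G)` by multiplying with `(i, a + k, F)` on the left and `(b + k, j, F)`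
on the right, so an ideal containing one triple contains them all.
-/

lemma mem_zshift {n m : ℤ} {F : Set ℤ} : m ∈ zshift n F ↔ m - n ∈ F :=
  ⟨by rintro ⟨k, hk, rfl⟩; simpa using hk, fun hm => ⟨m - n, hm, by ring⟩⟩

@[simp]
lemma zshift_zero (F : Set ℤ) : zshift 0 F = F := by
  ext m
  simp [mem_zshift]

lemma zshift_zshift (a b : ℤ) (F : Set ℤ) : zshift a (zshift b F) = zshift (a + b) F := by
  ext m
  simp only [mem_zshift, sub_add_eq_sub_sub]

lemma zshift_mono {F G : Set ℤ} (a : ℤ) (h : F ⊆ G) : zshift a F ⊆ zshift a G :=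
  fun _ hm => mem_zshift.2 (h (mem_zshift.1 hm))

def ShiftLE (F G : Set ℤ) : Prop := ∃ k : ℕ, F ⊆ zshift (-(k : ℤ)) G

namespace ShiftLE

lemma of_subset {F G : Set ℤ} (h : F ⊆ G) : ShiftLE F G := ⟨0, by simpa using h⟩

lemma trans {F G H : Set ℤ} : ShiftLE F G → ShiftLE G H → ShiftLE F H := by
  rintro ⟨k, hk⟩ ⟨l, hl⟩
  refine ⟨k + l, hk.trans ?_⟩
  calc zshift (-(k : ℤ)) G ⊆ zshift (-(k : ℤ)) (zshift (-(l : ℤ)) H) := zshift_mono _ hl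
    _ = zshift (-((k + l : ℕ) : ℤ)) H := by rw [zshift_zshift]; push_cast; ring_nf

lemma inter_left (A B : Set ℤ) (m : ℕ) : ShiftLE (A ∩ zshift (-(m : ℤ)) B) A :=
  of_subset Set.inter_subset_left

lemma inter_right (A B : Set ℤ) (m : ℕ) : ShiftLE (A ∩ zshift (-(m : ℤ)) B) B :=
  ⟨m, Set.inter_subset_right⟩

end ShiftLE

lemma smul3_third (x y : ℤ × ℤ × Set ℤ) :
    ∃ m : ℕ, (smul3 x y).2.2 = x.2.2 ∩ zshift (-(m : ℤ)) y.2.2 ∨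
      (smul3 x y).2.2 = y.2.2 ∩ zshift (-(m : ℤ)) x.2.2 := by
  unfold smul3
  split_ifs
  · refine ⟨(y.1 - x.2.1).toNat, Or.inr ?_⟩
    rw [Set.inter_comm, show x.2.1 - y.1 = -((y.1 - x.2.1).toNat : ℤ) by omega]
  · exact ⟨0, Or.inl (by simp)⟩
  · refine ⟨(x.2.1 - y.1).toNat, Or.inl ?_⟩
    rw [show y.1 - x.2.1 = -((x.2.1 - y.1).toNat : ℤ) by omega]

lemma smul3_mem_Scar {𝓕 : Set (Set ℤ)} (h : OmegaClosed 𝓕) {x y : ℤ × ℤ × Set ℤ}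
    (hx : x ∈ Scar 𝓕) (hy : y ∈ Scar 𝓕) : smul3 x y ∈ Scar 𝓕 := by
  show (smul3 x y).2.2 ∈ 𝓕
  obtain ⟨m, hm | hm⟩ := smul3_third x y
  · exact hm ▸ h.2 m _ hx _ hy
  · exact hm ▸ h.2 m _ hy _ hx

lemma shiftLE_smul3_left (x y : ℤ × ℤ × Set ℤ) : ShiftLE (smul3 x y).2.2 x.2.2 := by
  obtain ⟨m, hm | hm⟩ := smul3_third x y
  · exact hm ▸ ShiftLE.inter_left _ _ m
  · exact hm ▸ ShiftLE.inter_right _ _ m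

lemma shiftLE_smul3_right (x y : ℤ × ℤ × Set ℤ) : ShiftLE (smul3 x y).2.2 y.2.2 := by
  obtain ⟨m, hm | hm⟩ := smul3_third x y
  · exact hm ▸ ShiftLE.inter_right _ _ m
  · exact hm ▸ ShiftLE.inter_left _ _ m

def AbsorbsScar (𝓕 : Set (Set ℤ)) (J : Set (ℤ × ℤ × Set ℤ)) : Prop :=
  ∀ x ∈ J, ∀ s ∈ Scar 𝓕, smul3 s x ∈ J ∧ smul3 x s ∈ J

lemma absorbsScar_setOf_shiftLE {𝓕 : Set (Set ℤ)} (h : OmegaClosed 𝓕) (H : Set ℤ) :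
    AbsorbsScar 𝓕 {x | x ∈ Scar 𝓕 ∧ ShiftLE x.2.2 H} := fun _ ⟨hx, hxH⟩ _ hs =>
  ⟨⟨smul3_mem_Scar h hs hx, (shiftLE_smul3_right _ _).trans hxH⟩,
    ⟨smul3_mem_Scar h hx hs, (shiftLE_smul3_left _ _).trans hxH⟩⟩

lemma smul3_of_subset_zshift {F G : Set ℤ} {k : ℕ} (hFG : F ⊆ zshift (-(k : ℤ)) G)
    (i a b : ℤ) : smul3 (i, a + k, F) (a, b, G) = (i, b + k, F) := by
  have hinter : F ∩ zshift (-(k : ℤ)) G = F := Set.inter_eq_left.2 hFG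
  rcases Nat.eq_zero_or_pos k with rfl | hk
  · simp only [zshift_zero, Nat.cast_zero, neg_zero, add_zero] at hinter ⊢
    simp [smul3, hinter]
  · have hsub : a - (a + k) = -(k : ℤ) := by ring
    simp only [smul3, hsub, hinter]
    rw [if_neg (by omega), if_neg (by omega)]
    congr 2
    ring

lemma smul3_self_of_eq (i j l : ℤ) (F : Set ℤ) : smul3 (i, j, F) (j, l, F) = (i, l, F) := by
  simp [smul3]

lemma mem_of_absorbsScar {𝓕 : Set (Set ℤ)} {J : Set (ℤ × ℤ × Set ℤ)} (hJ : AbsorbsScar 𝓕 J)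
    {x y : ℤ × ℤ × Set ℤ} (hx : x ∈ J) (hy : y ∈ Scar 𝓕) (hyx : ShiftLE y.2.2 x.2.2) :
    y ∈ J := by
  obtain ⟨i, j, F⟩ := y
  obtain ⟨a, b, G⟩ := x
  obtain ⟨k, hk⟩ := hyx
  have hleft : (i, b + k, F) ∈ J := by
    simpa [smul3_of_subset_zshift hk] using (hJ _ hx (i, a + k, F) hy).1
  simpa [smul3_self_of_eq] using (hJ _ hleft (b + k, j, F) hy).2

theorem stmt10_general (𝓕 : Set (Set ℤ)) (h : OmegaClosed 𝓕) :
    (∀ J : Set (ℤ × ℤ × Set ℤ), J.Nonempty → J ⊆ Scar 𝓕 →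
      (∀ x ∈ J, ∀ s ∈ Scar 𝓕, smul3 s x ∈ J ∧ smul3 x s ∈ J) → J = Scar 𝓕) ↔
    (∀ F₁ ∈ 𝓕, ∀ F₂ ∈ 𝓕,
      ∃ k₁ k₂ : ℕ, F₁ ⊆ zshift (-(k₁ : ℤ)) F₂ ∧ F₂ ⊆ zshift (-(k₂ : ℤ)) F₁) := by
  constructor
  · intro hsimple
    have key : ∀ G ∈ 𝓕, ∀ H ∈ 𝓕, ShiftLE G H := by
      intro G hG H hH
      have hJ : {x | x ∈ Scar 𝓕 ∧ ShiftLE x.2.2 H} = Scar 𝓕 :=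
        hsimple _ ⟨(0, 0, H), hH, ShiftLE.of_subset le_rfl⟩ (fun _ hx => hx.1)
          (absorbsScar_setOf_shiftLE h H)
      have hGJ : ((0 : ℤ), (0 : ℤ), G) ∈ {x | x ∈ Scar 𝓕 ∧ ShiftLE x.2.2 H} := by
        rw [hJ]; exact hG
      exact hGJ.2
    intro F₁ hF₁ F₂ hF₂
    obtain ⟨k₁, hk₁⟩ := key F₁ hF₁ F₂ hF₂
    obtain ⟨k₂, hk₂⟩ := key F₂ hF₂ F₁ hF₁
    exact ⟨k₁, k₂, hk₁, hk₂⟩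
  · intro hshift J ⟨x, hx⟩ hJsub hJ
    refine hJsub.antisymm fun y hy => mem_of_absorbsScar hJ hx hy ?_
    obtain ⟨k, -, hk, -⟩ := hshift _ hy _ (hJsub hx)
    exact ⟨k, hk⟩

/-- simplicity criterion for `S(𝓕)` when `∅ ∉ 𝓕`. -/
theorem stmt10 (𝓕 : Set (Set ℤ)) (h : OmegaClosed 𝓕) (hne : 𝓕.Nonempty)
    (hempty : (∅ : Set ℤ) ∉ 𝓕) :
    (∀ J : Set (ℤ × ℤ × Set ℤ), J.Nonempty → J ⊆ Scar 𝓕 →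
      (∀ x ∈ J, ∀ s ∈ Scar 𝓕, smul3 s x ∈ J ∧ smul3 x s ∈ J) → J = Scar 𝓕) ↔
    (∀ F₁ ∈ 𝓕, ∀ F₂ ∈ 𝓕,
      ∃ k₁ k₂ : ℕ, F₁ ⊆ zshift (-(k₁ : ℤ)) F₂ ∧ F₂ ⊆ zshift (-(k₂ : ℤ)) F₁) :=
  stmt10_general 𝓕 h
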